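/- Let P be a nonempty poset satisfying the upper bound property and the lower bound property, K = WithBot (WithTop P), and Θ a congruence on K. Let E be the equivalence relation on P given by a E b iff (↑a, ↑b) ∈ Θ. Suppose there exist c, d ∈ P such that the quotient join of the E-classes [c] and [d] is undefined, i.e. no x ∈ P satisfies (↑x, ↑c ⊔ ↑d) ∈ Θ. Then for every a ∈ P we have (↑a, ⊤) ∉ Θ. Dually, if there exist c', d' ∈ P such that no x ∈ P satisfies (↑x, ↑c' ⊓ ↑d') ∈ Θ, then for every a ∈ P we have (↑a, ⊥) ∉ Θ. -/
import Mathlib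


/-- A poset satisfies the upper bound property if every pair of elements having
an upper bound has a least upper bound. -/
def UBP (P : Type*) [PartialOrder P] : Prop :=
  ∀ a b : P, (∃ u, a ≤ u ∧ b ≤ u) → ∃ c, IsLUB {a, b} c

/-- A poset satisfies the lower bound property if every pair of elements having
a lower bound has a greatest lower bound. -/
def LBP (P : Type*) [PartialOrder P] : Prop :=
  ∀ a b : P, (∃ l, l ≤ a ∧ l ≤ b) → ∃ c, IsGLB {a, b} c

/-- The canonical embedding of `P` into its two-point extension `WithBot (WithTop P)`. -/
def emb {P : Type*} (a : P) : WithBot (WithTop P) := ((a : WithTop P) : WithBot (WithTop P))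

/-- A congruence on a (lattice-ordered) poset `K`: an equivalence relation compatible
with binary suprema and binary infima, expressed via `IsLUB` and `IsGLB`. -/
def IsCongruence {K : Type*} [PartialOrder K] (Θ : K → K → Prop) : Prop :=
  Equivalence Θ ∧
  (∀ a b c d sa sb : K, Θ a b → Θ c d → IsLUB {a, c} sa → IsLUB {b, d} sb → Θ sa sb) ∧
  (∀ a b c d ia ib : K, Θ a b → Θ c d → IsGLB {a, c} ia → IsGLB {b, d} ib → Θ ia ib)

lemma emb_le_emb {P : Type*} [PartialOrder P] {a b : P} : emb a ≤ emb b ↔ a ≤ b := by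
  simp [emb]

lemma le_cases {P : Type*} [PartialOrder P] {c : P} {b : WithBot (WithTop P)}
    (h : emb c ≤ b) : b = ⊤ ∨ ∃ u : P, b = emb u := by
  cases b with
  | bot => simp [emb] at h
  | coe t =>
    cases t with
    | top => left; rfl
    | coe u => right; exact ⟨u, rfl⟩

lemma ge_cases {P : Type*} [PartialOrder P] {c : P} {b : WithBot (WithTop P)}
    (h : b ≤ emb c) : b = ⊥ ∨ ∃ u : P, b = emb u := by
  cases b with
  | bot => left; rfl
  | coe t =>
    cases t with
    | top => exfalso; exact absurd h (by simp [emb])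
    | coe u => right; exact ⟨u, rfl⟩

/-- Let `P` be a nonempty poset with the upper and lower bound properties,
`K = WithBot (WithTop P)` and `Θ` a congruence on `K`. If for some `c, d ∈ P` no `x ∈ P`
is `Θ`-related to the supremum `↑c ⊔ ↑d` (i.e. their quotient join is undefined), then no
element `↑a` (`a ∈ P`) is `Θ`-related to `⊤`; dually for meets and `⊥`. -/
theorem undefined_join_top_class {P : Type*} [PartialOrder P] [Nonempty P]
    (hUBP : UBP P) (hLBP : LBP P)
    (Θ : WithBot (WithTop P) → WithBot (WithTop P) → Prop)
    (hΘ : IsCongruence Θ) :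
    ((∃ c d : P, ∀ (x : P) (s : WithBot (WithTop P)),
        IsLUB {emb c, emb d} s → ¬ Θ (emb x) s) →
      ∀ a : P, ¬ Θ (emb a) ⊤) ∧
    ((∃ c' d' : P, ∀ (x : P) (i : WithBot (WithTop P)),
        IsGLB {emb c', emb d'} i → ¬ Θ (emb x) i) →
      ∀ a : P, ¬ Θ (emb a) ⊥) := by
  obtain ⟨hEq, -, -⟩ := hΘ
  constructor
  · rintro ⟨c, d, hcd⟩ a ha
    rcases Classical.em (∃ u : P, c ≤ u ∧ d ≤ u) with ⟨u, hcu, hdu⟩ | hno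
    · obtain ⟨e, he⟩ := hUBP c d ⟨u, hcu, hdu⟩
      refine hcd e (emb e) ⟨?_, ?_⟩ (hEq.refl _)
      · rintro x hx
        rcases hx with rfl | rfl
        · exact emb_le_emb.mpr (he.1 (by simp))
        · exact emb_le_emb.mpr (he.1 (by simp))
      · intro b hb
        have hc : emb c ≤ b := hb (by simp)
        have hd : emb d ≤ b := hb (by simp)
        rcases le_cases hc with rfl | ⟨v, rfl⟩
        · exact le_top
        · exact emb_le_emb.mpr (he.2 (by
            rintro x hx
            rcases hx with rfl | rfl
            · exact emb_le_emb.mp hc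
            · exact emb_le_emb.mp hd))
    · refine hcd a ⊤ ⟨fun x _ => le_top, ?_⟩ ha
      intro b hb
      have hc : emb c ≤ b := hb (by simp)
      have hd : emb d ≤ b := hb (by simp)
      rcases le_cases hc with rfl | ⟨v, rfl⟩
      · exact le_refl _
      · exact absurd ⟨v, emb_le_emb.mp hc, emb_le_emb.mp hd⟩ hno
  · rintro ⟨c, d, hcd⟩ a ha
    rcases Classical.em (∃ u : P, u ≤ c ∧ u ≤ d) with ⟨u, hcu, hdu⟩ | hno
    · obtain ⟨e, he⟩ := hLBP c d ⟨u, hcu, hdu⟩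
      refine hcd e (emb e) ⟨?_, ?_⟩ (hEq.refl _)
      · rintro x hx
        rcases hx with rfl | rfl
        · exact emb_le_emb.mpr (he.1 (by simp))
        · exact emb_le_emb.mpr (he.1 (by simp))
      · intro b hb
        have hc : b ≤ emb c := hb (by simp)
        have hd : b ≤ emb d := hb (by simp)
        rcases ge_cases hc with rfl | ⟨v, rfl⟩
        · exact bot_le
        · exact emb_le_emb.mpr (he.2 (by
            rintro x hx
            rcases hx with rfl | rfl
            · exact emb_le_emb.mp hc
            · exact emb_le_emb.mp hd))
    · refine hcd a ⊥ ⟨fun x _ => bot_le, ?_⟩ ha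
      intro b hb
      have hc : b ≤ emb c := hb (by simp)
      have hd : b ≤ emb d := hb (by simp)
      rcases ge_cases hc with rfl | ⟨v, rfl⟩
      · exact le_refl _
      · exact absurd ⟨v, emb_le_emb.mp hc, emb_le_emb.mp hd⟩ hno
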